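/- arXiv:1806.00313 — 10 statements merged into one kernel-verified Lean document; each statement's English description precedes it below -/
import Mathlib

section
/- Let A and P be symmetric positive definite N×N matrices, b ∈ ℝ^N, x* = A^{-1}b, and let x_k denote the PCG iterates for initial guess x_0. Then there holds the Pythagoras identity ‖x* − x_{k+1}‖_A² + ‖x_{k+1} − x_k‖_A² = ‖x* − x_k‖_A² for all k ∈ ℕ₀. -/
/-! The error `x* - x_{k+1}` is mapped by `A` to the residual `r_{k+1}`, and
`x_{k+1} - x_k = α_k p_k`, so the identity is Pythagoras for the `A`-inner product once
`r_{k+1} ⬝ᵥ p_k = 0`. That orthogonality is what the step size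
`α_k = (r_k ⬝ᵥ P⁻¹ r_k) / (p_k ⬝ᵥ A p_k)` is chosen for, given the invariant
`r_k ⬝ᵥ p_k = r_k ⬝ᵥ P⁻¹ r_k`, which survives a step because `p_{k+1} = P⁻¹ r_{k+1} + β_k p_k`. -/

open Matrix

/-- One step of the preconditioned conjugate gradient method (PCG), acting on the
state `(x, r, p)` (iterate, residual, search direction); `Pinv` is the inverse of
the preconditioner. -/
noncomputable def pcgStep {N : ℕ} (A Pinv : Matrix (Fin N) (Fin N) ℝ)
    (s : (Fin N → ℝ) × (Fin N → ℝ) × (Fin N → ℝ)) :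
    (Fin N → ℝ) × (Fin N → ℝ) × (Fin N → ℝ) :=
  let x := s.1
  let r := s.2.1
  let p := s.2.2
  let α := (r ⬝ᵥ Pinv.mulVec r) / (p ⬝ᵥ A.mulVec p)
  let r' := r - α • A.mulVec p
  let β := (r' ⬝ᵥ Pinv.mulVec r') / (r ⬝ᵥ Pinv.mulVec r)
  (x + α • p, r', Pinv.mulVec r' + β • p)

/-- The PCG iteration: state after `k` steps, starting from the initial guess `x0`
for the linear system `A x = b` with preconditioner `P` (passed via `Pinv = P⁻¹`). -/
noncomputable def pcg {N : ℕ} (A Pinv : Matrix (Fin N) (Fin N) ℝ)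
    (b x0 : Fin N → ℝ) : ℕ → (Fin N → ℝ) × (Fin N → ℝ) × (Fin N → ℝ)
  | 0 => (x0, b - A.mulVec x0, Pinv.mulVec (b - A.mulVec x0))
  | k + 1 => pcgStep A Pinv (pcg A Pinv b x0 k)

section

variable {n : Type*} [Fintype n] {M : Matrix n n ℝ}

theorem Matrix.IsHermitian.dotProduct_mulVec_comm (hM : M.IsHermitian) (v w : n → ℝ) :
    v ⬝ᵥ M *ᵥ w = w ⬝ᵥ M *ᵥ v := by
  rw [dotProduct_mulVec, ← mulVec_transpose, ← conjTranspose_eq_transpose_of_trivial, hM,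
    dotProduct_comm]

theorem Matrix.IsHermitian.dotProduct_mulVec_pythagoras (hM : M.IsHermitian) {u v w : n → ℝ}
    (h : (u - w) ⬝ᵥ M *ᵥ (w - v) = 0) :
    (u - w) ⬝ᵥ M *ᵥ (u - w) + (w - v) ⬝ᵥ M *ᵥ (w - v) = (u - v) ⬝ᵥ M *ᵥ (u - v) := by
  have h' : (w - v) ⬝ᵥ M *ᵥ (u - w) = 0 := hM.dotProduct_mulVec_comm (u - w) (w - v) ▸ h
  rw [← sub_add_sub_cancel u w v]
  simp only [mulVec_add, dotProduct_add, add_dotProduct, h, h']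
  ring

theorem Matrix.PosDef.dotProduct_mulVec_ne_zero (hM : M.PosDef) {v : n → ℝ} (hv : v ≠ 0) :
    v ⬝ᵥ M *ᵥ v ≠ 0 := by
  simpa using (hM.dotProduct_mulVec_pos hv).ne'

end

section

variable {N : ℕ} {A Pinv : Matrix (Fin N) (Fin N) ℝ}

theorem pcgStep_residual_dotProduct_direction (hA : A.PosDef)
    (s : (Fin N → ℝ) × (Fin N → ℝ) × (Fin N → ℝ))
    (hs : s.2.1 ⬝ᵥ s.2.2 = s.2.1 ⬝ᵥ Pinv *ᵥ s.2.1) :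
    (pcgStep A Pinv s).2.1 ⬝ᵥ s.2.2 = 0 := by
  obtain ⟨x, r, p⟩ := s
  by_cases hp : p = 0
  · simp [pcgStep, hp]
  · simp only [pcgStep, sub_dotProduct, smul_dotProduct, smul_eq_mul] at hs ⊢
    rw [dotProduct_comm (A *ᵥ p), div_mul_cancel₀ _ (hA.dotProduct_mulVec_ne_zero hp), hs,
      sub_self]

theorem pcg_succ_fst_sub (b x0 : Fin N → ℝ) (k : ℕ) :
    (pcg A Pinv b x0 (k + 1)).1 - (pcg A Pinv b x0 k).1
      = ((pcg A Pinv b x0 k).2.1 ⬝ᵥ Pinv *ᵥ (pcg A Pinv b x0 k).2.1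
          / ((pcg A Pinv b x0 k).2.2 ⬝ᵥ A *ᵥ (pcg A Pinv b x0 k).2.2))
        • (pcg A Pinv b x0 k).2.2 :=
  add_sub_cancel_left _ _

theorem pcg_residual (b x0 : Fin N → ℝ) (k : ℕ) :
    (pcg A Pinv b x0 k).2.1 = b - A *ᵥ (pcg A Pinv b x0 k).1 := by
  induction k with
  | zero => rfl
  | succ k ih =>
    simp only [pcg, pcgStep, ih, mulVec_add, mulVec_smul]
    abel

theorem pcg_residual_dotProduct_direction (hA : A.PosDef) (b x0 : Fin N → ℝ) (k : ℕ) :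
    (pcg A Pinv b x0 k).2.1 ⬝ᵥ (pcg A Pinv b x0 k).2.2
      = (pcg A Pinv b x0 k).2.1 ⬝ᵥ Pinv *ᵥ (pcg A Pinv b x0 k).2.1 := by
  induction k with
  | zero => rfl
  | succ k ih =>
    have h := pcgStep_residual_dotProduct_direction hA _ ih
    simp only [pcg, pcgStep] at h ⊢
    rw [dotProduct_add, dotProduct_smul, h, smul_zero, add_zero]

theorem pcg_residual_succ_dotProduct_direction (hA : A.PosDef) (b x0 : Fin N → ℝ) (k : ℕ) :
    (pcg A Pinv b x0 (k + 1)).2.1 ⬝ᵥ (pcg A Pinv b x0 k).2.2 = 0 :=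
  pcgStep_residual_dotProduct_direction hA _ (pcg_residual_dotProduct_direction hA b x0 k)

end

theorem stmt_1_general {N : ℕ} (A P : Matrix (Fin N) (Fin N) ℝ)
    (hA : A.PosDef)
    (b x0 xstar : Fin N → ℝ) (hxstar : A.mulVec xstar = b) :
    ∀ k : ℕ,
      (xstar - (pcg A P⁻¹ b x0 (k + 1)).1) ⬝ᵥ A.mulVec (xstar - (pcg A P⁻¹ b x0 (k + 1)).1)
        + ((pcg A P⁻¹ b x0 (k + 1)).1 - (pcg A P⁻¹ b x0 k).1) ⬝ᵥ
            A.mulVec ((pcg A P⁻¹ b x0 (k + 1)).1 - (pcg A P⁻¹ b x0 k).1)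
      = (xstar - (pcg A P⁻¹ b x0 k).1) ⬝ᵥ A.mulVec (xstar - (pcg A P⁻¹ b x0 k).1) := by
  intro k
  apply hA.1.dotProduct_mulVec_pythagoras
  rw [hA.1.dotProduct_mulVec_comm, mulVec_sub, hxstar, ← pcg_residual, dotProduct_comm,
    pcg_succ_fst_sub, dotProduct_smul, pcg_residual_succ_dotProduct_direction hA, smul_zero]

/-- Pythagoras identity for PCG:
`‖x* − x_{k+1}‖_A² + ‖x_{k+1} − x_k‖_A² = ‖x* − x_k‖_A²` for all `k`. -/
theorem stmt_1 {N : ℕ} (A P : Matrix (Fin N) (Fin N) ℝ)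
    (hA : A.PosDef) (hP : P.PosDef)
    (b x0 xstar : Fin N → ℝ) (hxstar : A.mulVec xstar = b) :
    ∀ k : ℕ,
      (xstar - (pcg A P⁻¹ b x0 (k + 1)).1) ⬝ᵥ A.mulVec (xstar - (pcg A P⁻¹ b x0 (k + 1)).1)
        + ((pcg A P⁻¹ b x0 (k + 1)).1 - (pcg A P⁻¹ b x0 k).1) ⬝ᵥ
            A.mulVec ((pcg A P⁻¹ b x0 (k + 1)).1 - (pcg A P⁻¹ b x0 k).1)
      = (xstar - (pcg A P⁻¹ b x0 k).1) ⬝ᵥ A.mulVec (xstar - (pcg A P⁻¹ b x0 k).1) :=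
  stmt_1_general A P hA b x0 xstar hxstar
end

section
/- Suppose a sequence of positive real numbers (Δ_n)_{n∈ℕ₀} satisfies the summability estimate Σ_{n=0}^{N} Δ_n^{-1} ≤ C Δ_N^{-1} for all N ∈ ℕ₀ with a constant C ≥ 1. Then there exist constants C' > 0 and 0 < q < 1 such that Δ_{N} ≤ C' q^{2(N−n)} Δ_n for all N ≥ n ≥ 0; in particular Δ_N^{1/2} ≤ (C')^{1/2} q^{N−n} Δ_n^{1/2}. -/
/-- A reciprocal-sum bound implies geometric (linear) convergence: if `Δ_n > 0` and
`Σ_{n=0}^{N} Δ_n⁻¹ ≤ C Δ_N⁻¹` for all `N`, then there are `C' > 0` and `0 < q < 1`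
such that `Δ_N ≤ C' q^{2(N−n)} Δ_n` for all `N ≥ n`; in particular
`Δ_N^{1/2} ≤ (C')^{1/2} q^{N−n} Δ_n^{1/2}`. -/
theorem stmt_4 (Δ : ℕ → ℝ) (hΔ : ∀ n, 0 < Δ n) (C : ℝ) (hC : 1 ≤ C)
    (hsum : ∀ N : ℕ, ∑ n ∈ Finset.range (N + 1), (Δ n)⁻¹ ≤ C * (Δ N)⁻¹) :
    ∃ C' q : ℝ, 0 < C' ∧ 0 < q ∧ q < 1 ∧
      ∀ n N : ℕ, n ≤ N →
        Δ N ≤ C' * q ^ (2 * (N - n)) * Δ n ∧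
        Real.sqrt (Δ N) ≤ Real.sqrt C' * q ^ (N - n) * Real.sqrt (Δ n) := by
  have hCpos : (0:ℝ) < C := lt_of_lt_of_le one_pos hC
  set D : ℝ := C + 1 with hDdef
  have hDpos : 0 < D := by positivity
  set S : ℕ → ℝ := fun N => ∑ n ∈ Finset.range (N + 1), (Δ n)⁻¹ with hSdef
  have hsum' : ∀ N, S N ≤ D * (Δ N)⁻¹ := by
    intro N
    have h := hsum N
    have h2 : 0 < (Δ N)⁻¹ := inv_pos.mpr (hΔ N)
    nlinarith
  set ρ : ℝ := C / (C + 1) with hρdef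
  have hρpos : 0 < ρ := by positivity
  have hρlt : ρ < 1 := by
    rw [hρdef, div_lt_one (by positivity)]; linarith
  have key : ∀ n k, (Δ n)⁻¹ * (ρ⁻¹) ^ k ≤ S (n + k) := by
    intro n k
    induction k with
    | zero =>
      simp only [pow_zero, mul_one, Nat.add_zero, hSdef]
      refine Finset.single_le_sum (f := fun i => (Δ i)⁻¹) ?_ ?_
      · intro i _; exact (inv_pos.mpr (hΔ i)).le
      · exact Finset.self_mem_range_succ n
    | succ k ih =>
      have h1 : S (n + (k + 1)) = S (n + k) + (Δ (n + k + 1))⁻¹ := by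
        simp only [hSdef]
        rw [show n + (k + 1) + 1 = (n + k + 1) + 1 by ring, Finset.sum_range_succ]
      have h2 : S (n + (k + 1)) ≤ D * (Δ (n + k + 1))⁻¹ := by
        rw [show n + (k + 1) = n + k + 1 by ring]; exact hsum' _
      -- S(n+k+1) ≥ S(n+k) * D/(D-1) = S(n+k) * (C+1)/C = S(n+k) * ρ⁻¹
      have hρinv : ρ⁻¹ = (C + 1) / C := by
        rw [hρdef, inv_div]
      have hstep : S (n + k) * ρ⁻¹ ≤ S (n + (k + 1)) := by
        rw [hρinv, ← mul_div_assoc, div_le_iff₀ hCpos]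
        nlinarith [h1, h2]
      calc (Δ n)⁻¹ * ρ⁻¹ ^ (k + 1) = ((Δ n)⁻¹ * ρ⁻¹ ^ k) * ρ⁻¹ := by ring
        _ ≤ S (n + k) * ρ⁻¹ := by
            apply mul_le_mul_of_nonneg_right ih (by positivity)
        _ ≤ S (n + (k + 1)) := hstep
  refine ⟨D, Real.sqrt ρ, hDpos, Real.sqrt_pos.mpr hρpos, ?_, ?_⟩
  · nlinarith [Real.sq_sqrt hρpos.le, Real.sqrt_nonneg ρ]
  intro n N hnN
  have hq2 : Real.sqrt ρ ^ (2 * (N - n)) = ρ ^ (N - n) := by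
    rw [pow_mul, Real.sq_sqrt hρpos.le]
  have main : Δ N ≤ D * Real.sqrt ρ ^ (2 * (N - n)) * Δ n := by
    rw [hq2]
    obtain ⟨k, rfl⟩ := Nat.exists_eq_add_of_le hnN
    have hk : n + k - n = k := by omega
    rw [hk]
    have h1 := (key n k).trans (hsum' (n + k))
    -- (Δ n)⁻¹ * ρ⁻¹^k ≤ D * (Δ (n+k))⁻¹, so Δ (n+k) ≤ D * ρ^k * Δ n
    have hΔn := hΔ n
    have hΔN := hΔ (n + k)
    have hρk : 0 < ρ ^ k := by positivity
    have hρik : ρ⁻¹ ^ k = (ρ ^ k)⁻¹ := by rw [inv_pow]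
    rw [hρik] at h1
    have h3 : (1:ℝ) ≤ D * (Δ (n + k))⁻¹ * (ρ ^ k * Δ n) := by
      calc (1:ℝ) = ((Δ n)⁻¹ * (ρ ^ k)⁻¹) * (ρ ^ k * Δ n) := by field_simp
        _ ≤ _ := mul_le_mul_of_nonneg_right h1 (by positivity)
    calc Δ (n + k) = Δ (n + k) * 1 := by ring
      _ ≤ Δ (n + k) * (D * (Δ (n + k))⁻¹ * (ρ ^ k * Δ n)) :=
          mul_le_mul_of_nonneg_left h3 hΔN.le
      _ = D * ρ ^ k * Δ n := by field_simp
  refine ⟨main, ?_⟩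
  have hqn : Real.sqrt (Real.sqrt ρ ^ (2 * (N - n))) = Real.sqrt ρ ^ (N - n) := by
    rw [pow_mul', Real.sqrt_sq (by positivity)]
  calc Real.sqrt (Δ N) ≤ Real.sqrt (D * Real.sqrt ρ ^ (2 * (N - n)) * Δ n) :=
        Real.sqrt_le_sqrt main
    _ = Real.sqrt D * Real.sqrt ρ ^ (N - n) * Real.sqrt (Δ n) := by
        rw [Real.sqrt_mul (by positivity), Real.sqrt_mul (by positivity), hqn]
end

section
/- Let H be a real Hilbert space with norm |||·|||, let φ*_j, φ ∈ H, and let η, η* ≥ 0 satisfy the stability |η − η*| ≤ C_stb |||φ*_j − φ|||. Assume |||φ*_j − φ||| ≤ (q/(1−q)) λ η with 0 < q < 1, λ > 0 and λ C_stb q/(1−q) < 1. Then |||φ*_j − φ||| ≤ λ (q/(1−q)) (1 − λ C_stb q/(1−q))^{-1} η*, and moreover (1 − λ C_stb q/(1−q)) η ≤ η* ≤ (1 + λ C_stb q/(1−q)) η. -/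
/-- Abstract version of Lemma 15: stability `|η − η*| ≤ C_stb ‖φ*_j − φ‖` together with
`‖φ*_j − φ‖ ≤ (q/(1−q)) λ η` and `λ C_stb q/(1−q) < 1` imply
`‖φ*_j − φ‖ ≤ λ (q/(1−q)) (1 − λ C_stb q/(1−q))⁻¹ η*` and the two-sided equivalence
`(1 − λ C_stb q/(1−q)) η ≤ η* ≤ (1 + λ C_stb q/(1−q)) η`. -/
theorem stmt_7 (H : Type*) [NormedAddCommGroup H] [InnerProductSpace ℝ H]
    (φj φ : H) (η ηstar Cstb q lam : ℝ)
    (hη : 0 ≤ η) (hηstar : 0 ≤ ηstar) (hCstb : 0 < Cstb)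
    (hq0 : 0 < q) (hq1 : q < 1) (hlam : 0 < lam)
    (hsmall : lam * Cstb * (q / (1 - q)) < 1)
    (hstab : |η - ηstar| ≤ Cstb * ‖φj - φ‖)
    (hpcg : ‖φj - φ‖ ≤ (q / (1 - q)) * lam * η) :
    ‖φj - φ‖ ≤ lam * (q / (1 - q)) * (1 - lam * Cstb * (q / (1 - q)))⁻¹ * ηstar ∧
    (1 - lam * Cstb * (q / (1 - q))) * η ≤ ηstar ∧
    ηstar ≤ (1 + lam * Cstb * (q / (1 - q))) * η := by
  set d := ‖φj - φ‖ with hd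
  have hd0 : 0 ≤ d := norm_nonneg _
  have hc : 0 < q / (1 - q) := div_pos hq0 (by linarith)
  have h1 := abs_le.mp hstab
  obtain ⟨h1a, h1b⟩ := h1
  have hb : 0 < 1 - lam * Cstb * (q / (1 - q)) := by linarith
  have hlow : (1 - lam * Cstb * (q / (1 - q))) * η ≤ ηstar := by nlinarith
  refine ⟨?_, hlow, by nlinarith⟩
  have hinv : η ≤ (1 - lam * Cstb * (q / (1 - q)))⁻¹ * ηstar := by
    have h2 := mul_le_mul_of_nonneg_left hlow (inv_pos.mpr hb).le
    rwa [← mul_assoc, inv_mul_cancel₀ hb.ne', one_mul] at h2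
  calc d ≤ (q / (1 - q)) * lam * η := hpcg
    _ ≤ (q / (1 - q)) * lam * ((1 - lam * Cstb * (q / (1 - q)))⁻¹ * ηstar) := by
        exact mul_le_mul_of_nonneg_left hinv (by positivity)
    _ = lam * (q / (1 - q)) * (1 - lam * Cstb * (q / (1 - q)))⁻¹ * ηstar := by ring
end

section
/- Let X be a finite-dimensional real Hilbert space decomposed as X = Σ_{i∈I} X_i, with additive Schwarz operator S = Σ_i S_i where S_i is the X-orthogonal projection onto X_i. Then S is invertible and ⟨S^{-1}x, x⟩_X = |||x|||_X² := inf{Σ_{i∈I} ‖x_i‖_X² : x = Σ_i x_i, x_i ∈ X_i} for all x ∈ X. -/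
open scoped BigOperators

/-- The squared multilevel norm `|||x|||²` associated with a subspace decomposition:
infimum of `Σ_i ‖x_i‖²` over all decompositions `x = Σ_i x_i` with `x_i ∈ X_i`. -/
noncomputable def multiNormSq {ι X : Type*} [Fintype ι]
    [NormedAddCommGroup X] [InnerProductSpace ℝ X]
    (Xs : ι → Submodule ℝ X) (x : X) : ℝ :=
  sInf {r : ℝ | ∃ f : ι → X, (∀ i, f i ∈ Xs i) ∧ (∑ i, f i) = x ∧ r = ∑ i, ‖f i‖ ^ 2}

/-!
With `Pᵢ` the orthogonal projections and `S = Σ Pᵢ`, one has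
`⟪y, S y⟫ = Σ ‖Pᵢ y‖²`, so `S x = 0` forces `x ⊥ Xᵢ` for every `i`, hence `x = 0`, and `S` is
invertible in finite dimension. For any decomposition `S y = Σ fᵢ` with `fᵢ ∈ Xᵢ`,
`⟪y, S y⟫ = Σ ⟪Pᵢ y, fᵢ⟫`, and `‖fᵢ‖² ≥ 2 ⟪Pᵢ y, fᵢ⟫ - ‖Pᵢ y‖²` summed over `i` gives
`Σ ‖fᵢ‖² ≥ ⟪y, S y⟫`; the decomposition `fᵢ = Pᵢ y` attains it. Putting `y = S⁻¹ x` gives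
`|||x|||² = ⟪S⁻¹ x, x⟫`.
-/

open scoped InnerProductSpace

namespace Submodule

theorem finsetSum_eq_sup {ι R M : Type*} [Semiring R] [AddCommMonoid M] [Module R M]
    (s : Finset ι) (p : ι → Submodule R M) : ∑ i ∈ s, p i = s.sup p :=
  rfl

theorem inner_starProjection_of_mem {X : Type*} [NormedAddCommGroup X] [InnerProductSpace ℝ X]
    (K : Submodule ℝ X) [K.HasOrthogonalProjection] (y : X) {w : X} (hw : w ∈ K) :
    ⟪K.starProjection y, w⟫_ℝ = ⟪y, w⟫_ℝ := by
  rw [inner_starProjection_left_eq_right, starProjection_eq_self_iff.mpr hw]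

end Submodule

section AdditiveSchwarz

variable {ι X : Type*} [Fintype ι] [NormedAddCommGroup X] [InnerProductSpace ℝ X]
  (Xs : ι → Submodule ℝ X) [∀ i, (Xs i).HasOrthogonalProjection]

noncomputable def additiveSchwarzOp : X →L[ℝ] X :=
  ∑ i, (Xs i).starProjection

theorem additiveSchwarzOp_apply (x : X) :
    additiveSchwarzOp Xs x = ∑ i, (Xs i).starProjection x :=
  sum_apply _ _ _

theorem inner_additiveSchwarzOp_eq_sum_inner {y : X} {f : ι → X} (hf : ∀ i, f i ∈ Xs i)
    (hsum : ∑ i, f i = additiveSchwarzOp Xs y) :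
    ⟪y, additiveSchwarzOp Xs y⟫_ℝ = ∑ i, ⟪(Xs i).starProjection y, f i⟫_ℝ := by
  rw [← hsum, inner_sum]
  exact Finset.sum_congr rfl fun i _ => ((Xs i).inner_starProjection_of_mem y (hf i)).symm

theorem inner_additiveSchwarzOp_self (y : X) :
    ⟪y, additiveSchwarzOp Xs y⟫_ℝ = ∑ i, ‖(Xs i).starProjection y‖ ^ 2 := by
  rw [inner_additiveSchwarzOp_eq_sum_inner Xs (fun i => (Xs i).starProjection_apply_mem y)
    (additiveSchwarzOp_apply Xs y).symm]
  simp only [real_inner_self_eq_norm_sq]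

theorem additiveSchwarzOp_injective (hXs : ⨆ i, Xs i = ⊤) :
    Function.Injective (additiveSchwarzOp Xs) := by
  refine (injective_iff_map_eq_zero _).mpr fun x hx => ?_
  have hproj : ∀ i, (Xs i).starProjection x = 0 := by
    have hsum : ∑ i, ‖(Xs i).starProjection x‖ ^ 2 = 0 := by
      rw [← inner_additiveSchwarzOp_self, hx, inner_zero_right]
    intro i
    simpa using (Finset.sum_eq_zero_iff_of_nonneg fun i _ => by positivity).mp hsum i
      (Finset.mem_univ i)
  have hperp : x ∈ (⨆ i, Xs i)ᗮ := by
    rw [← Submodule.iInf_orthogonal, Submodule.mem_iInf]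
    exact fun i => (Submodule.starProjection_apply_eq_zero_iff _).mp (hproj i)
  rwa [hXs, Submodule.top_orthogonal_eq_bot, Submodule.mem_bot] at hperp

theorem isLeast_sum_norm_sq_decomposition (y : X) :
    IsLeast {r : ℝ | ∃ f : ι → X, (∀ i, f i ∈ Xs i) ∧ (∑ i, f i) = additiveSchwarzOp Xs y ∧
      r = ∑ i, ‖f i‖ ^ 2} ⟪y, additiveSchwarzOp Xs y⟫_ℝ := by
  refine ⟨⟨fun i => (Xs i).starProjection y, fun i => (Xs i).starProjection_apply_mem y,
    (additiveSchwarzOp_apply Xs y).symm, inner_additiveSchwarzOp_self Xs y⟩, ?_⟩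
  rintro r ⟨f, hf, hsum, rfl⟩
  have hterm : ∀ i, 2 * ⟪(Xs i).starProjection y, f i⟫_ℝ - ‖(Xs i).starProjection y‖ ^ 2 ≤
      ‖f i‖ ^ 2 := fun i => by
    linarith [norm_sub_sq_real ((Xs i).starProjection y) (f i),
      sq_nonneg ‖(Xs i).starProjection y - f i‖]
  have hle := Finset.sum_le_sum fun i (_ : i ∈ Finset.univ) => hterm i
  rw [Finset.sum_sub_distrib, ← Finset.mul_sum, ← inner_additiveSchwarzOp_eq_sum_inner Xs hf hsum,
    ← inner_additiveSchwarzOp_self] at hle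
  linarith

theorem multiNormSq_additiveSchwarzOp_apply (y : X) :
    multiNormSq Xs (additiveSchwarzOp Xs y) = ⟪y, additiveSchwarzOp Xs y⟫_ℝ :=
  (isLeast_sum_norm_sq_decomposition Xs y).csInf_eq

end AdditiveSchwarz

/-- Oswald's identity: for a finite-dimensional Hilbert space `X = Σ_i X_i`, the
additive Schwarz operator `S = Σ_i S_i` is invertible and
`⟨S⁻¹ x, x⟩ = |||x|||²` for all `x ∈ X`. -/
theorem stmt_9 (ι X : Type) [Fintype ι]
    [NormedAddCommGroup X] [InnerProductSpace ℝ X] [FiniteDimensional ℝ X]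
    (Xs : ι → Submodule ℝ X)
    (hdecomp : (∑ i, Xs i) = (⊤ : Submodule ℝ X)) :
    ∃ Sinv : X →L[ℝ] X,
      (∀ x : X, Sinv ((∑ i, (Xs i).subtypeL.comp ((Xs i).orthogonalProjectionOnto) :
          X →L[ℝ] X) x) = x) ∧
      (∀ x : X, (∑ i, (Xs i).subtypeL.comp ((Xs i).orthogonalProjectionOnto) :
          X →L[ℝ] X) (Sinv x) = x) ∧
      (∀ x : X, (inner ℝ (Sinv x) x : ℝ) = multiNormSq Xs x) := by
  have hsup : ⨆ i, Xs i = ⊤ := by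
    rwa [← Finset.sup_univ_eq_iSup, ← Submodule.finsetSum_eq_sup]
  let S : X ≃L[ℝ] X := (LinearEquiv.ofInjectiveEndo _
    (additiveSchwarzOp_injective Xs hsup)).toContinuousLinearEquiv
  -- `starProjection` is by definition `subtypeL ∘L orthogonalProjectionOnto`, so `S` is the
  -- operator of the statement.
  refine ⟨S.symm, S.symm_apply_apply, S.apply_symm_apply, fun x => ?_⟩
  obtain ⟨y, rfl⟩ := S.surjective x
  rw [ContinuousLinearEquiv.coe_coe, S.symm_apply_apply]
  exact (multiNormSq_additiveSchwarzOp_apply Xs y).symm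
end

section
/- In the setting of Algorithm 3, assume for each mesh index j the Pythagoras identities |||φ* − φ*_j|||² + |||φ*_j − ψ|||² = |||φ* − ψ|||² (for ψ in the discrete space), the PCG contraction |||φ*_j − φ_{j,k+1}||| ≤ q |||φ*_j − φ_{j,k}|||, stability |η_j(ψ) − η_j(ψ')| ≤ C_stb |||ψ − ψ'|||, the stopping criterion |||φ_{j,k̲} − φ_{j,k̲−1}||| ≤ λ η_j(φ_{j,k̲}), and reliability |||φ* − φ*_j||| ≤ C_rel η_j(φ*_j). Then the quantities Δ_{j,k̲−1} := μη_j(φ_{j,k̲−1})² + |||φ* − φ_{j,k̲−1}|||² and Δ_{j,k̲} := μη_j(φ_{j,k̲})² + |||φ* − φ_{j,k̲}|||² are equivalent: there is a constant c ≥ 1 depending only on μ, λ, q, C_stb (and C_rel) with c^{-1} Δ_{j,k̲−1} ≤ Δ_{j,k̲} ≤ c Δ_{j,k̲−1}. -/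
set_option maxHeartbeats 1000000

/-- Step 1 of the proof of Theorem 4(b): equivalence of the weighted quasi-errors
`Δ_{j,k̲−1}` and `Δ_{j,k̲}`, with an equivalence constant `c ≥ 1` depending only on
`μ, λ, q, C_stb, C_rel`. Here `a = φ_{j,k̲−1}` and `b = φ_{j,k̲}`. -/
theorem stmt_10 (μ lam q Cstb Crel : ℝ)
    (hμ : 0 < μ) (hlam : 0 < lam) (hq0 : 0 < q) (hq1 : q < 1)
    (hCstb : 0 < Cstb) (hCrel : 0 < Crel) :
    ∃ c : ℝ, 1 ≤ c ∧
      ∀ (H : Type) [NormedAddCommGroup H] [InnerProductSpace ℝ H]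
        (Xj : Submodule ℝ H) (φstar φj a b : H) (ηa ηb ηstar : ℝ),
        φj ∈ Xj → a ∈ Xj → b ∈ Xj →
        -- Galerkin Pythagoras identity
        (∀ ψ ∈ Xj, ‖φstar - φj‖ ^ 2 + ‖φj - ψ‖ ^ 2 = ‖φstar - ψ‖ ^ 2) →
        -- PCG Pythagoras identity
        ‖φj - b‖ ^ 2 + ‖b - a‖ ^ 2 = ‖φj - a‖ ^ 2 →
        -- PCG contraction
        ‖φj - b‖ ≤ q * ‖φj - a‖ →
        0 ≤ ηa → 0 ≤ ηb → 0 ≤ ηstar →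
        -- stability (A1)
        |ηb - ηa| ≤ Cstb * ‖b - a‖ →
        |ηa - ηstar| ≤ Cstb * ‖a - φj‖ →
        |ηb - ηstar| ≤ Cstb * ‖b - φj‖ →
        -- stopping criterion
        ‖b - a‖ ≤ lam * ηb →
        -- reliability (A3)
        ‖φstar - φj‖ ≤ Crel * ηstar →
        c⁻¹ * (μ * ηa ^ 2 + ‖φstar - a‖ ^ 2) ≤ μ * ηb ^ 2 + ‖φstar - b‖ ^ 2 ∧
        μ * ηb ^ 2 + ‖φstar - b‖ ^ 2 ≤ c * (μ * ηa ^ 2 + ‖φstar - a‖ ^ 2) := by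
  obtain ⟨c, hcdef⟩ : ∃ c : ℝ, c = 3 + 2 * μ * Cstb ^ 2 + (1 + Cstb * lam) ^ 2 + lam ^ 2 / μ :=
    ⟨_, rfl⟩
  have hdivnn : 0 ≤ lam ^ 2 / μ := div_nonneg (sq_nonneg lam) hμ.le
  have h2n : (0:ℝ) ≤ 2 * μ * Cstb ^ 2 := by positivity
  have hsqn : (0:ℝ) ≤ (1 + Cstb * lam) ^ 2 := sq_nonneg _
  have hc2 : 2 ≤ c := by rw [hcdef]; linarith
  have hc1 : 1 ≤ c := by linarith
  have hcpos : 0 < c := by linarith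
  have hcm : c * μ = 3 * μ + 2 * μ * Cstb ^ 2 * μ + (1 + Cstb * lam) ^ 2 * μ + lam ^ 2 := by
    rw [hcdef]; field_simp
  have hk1 : μ * (1 + Cstb * lam) ^ 2 + lam ^ 2 ≤ c * μ := by
    have := mul_nonneg h2n hμ.le
    linarith [hμ.le]
  have hk2 : 1 + 2 * μ * Cstb ^ 2 ≤ c := by rw [hcdef]; linarith
  refine ⟨c, hc1, ?_⟩
  intro H _ _ Xj φstar φj a b ηa ηb ηstar hφjX haX hbX hGal hPyth hContr
    hηa hηb hηstar hstab hstaba hstabb hstop hrel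
  have ha2 := hGal a haX
  have hb2 := hGal b hbX
  have hdA : ‖b - a‖ ≤ ‖φj - a‖ := by
    have hsq : ‖b - a‖ ^ 2 ≤ ‖φj - a‖ ^ 2 := by linarith [sq_nonneg ‖φj - b‖]
    have h := Real.sqrt_le_sqrt hsq
    rwa [Real.sqrt_sq (norm_nonneg _), Real.sqrt_sq (norm_nonneg _)] at h
  have hba := abs_le.mp hstab
  have h1 : ηb ≤ ηa + Cstb * ‖φj - a‖ := by
    linarith [hba.2, mul_le_mul_of_nonneg_left hdA hCstb.le]
  have hηa' : ηa ≤ (1 + Cstb * lam) * ηb := by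
    have := mul_le_mul_of_nonneg_left hstop hCstb.le
    nlinarith [hba.1]
  have hEB : (0:ℝ) ≤ ‖φstar - b‖ ^ 2 := sq_nonneg _
  constructor
  · rw [inv_mul_le_iff₀ hcpos]
    have hηa2 : ηa ^ 2 ≤ (1 + Cstb * lam) ^ 2 * ηb ^ 2 := by
      have := mul_le_mul hηa' hηa' hηa (by positivity)
      nlinarith
    have f1 : μ * ηa ^ 2 ≤ μ * ((1 + Cstb * lam) ^ 2 * ηb ^ 2) :=
      mul_le_mul_of_nonneg_left hηa2 hμ.le
    have hd2 : ‖b - a‖ ^ 2 ≤ lam ^ 2 * ηb ^ 2 := by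
      have := mul_le_mul hstop hstop (norm_nonneg (b - a)) (by positivity : (0:ℝ) ≤ lam * ηb)
      nlinarith
    have f2 : (μ * (1 + Cstb * lam) ^ 2 + lam ^ 2) * ηb ^ 2 ≤ c * μ * ηb ^ 2 :=
      mul_le_mul_of_nonneg_right hk1 (sq_nonneg ηb)
    have f3 : 0 ≤ (c - 1) * ‖φstar - b‖ ^ 2 := mul_nonneg (by linarith) hEB
    nlinarith [f1, hd2, f2, f3]
  · have hηb2 : ηb ^ 2 ≤ 2 * ηa ^ 2 + 2 * Cstb ^ 2 * ‖φj - a‖ ^ 2 := by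
      have := mul_le_mul h1 h1 hηb (by positivity : (0:ℝ) ≤ ηa + Cstb * ‖φj - a‖)
      nlinarith [sq_nonneg (ηa - Cstb * ‖φj - a‖)]
    have g1 : μ * ηb ^ 2 ≤ μ * (2 * ηa ^ 2 + 2 * Cstb ^ 2 * ‖φj - a‖ ^ 2) :=
      mul_le_mul_of_nonneg_left hηb2 hμ.le
    have g2 : 0 ≤ (c - 2) * (μ * ηa ^ 2) := mul_nonneg (by linarith) (by positivity)
    have g3 : 0 ≤ (c - 1) * ‖φstar - φj‖ ^ 2 := mul_nonneg (by linarith) (sq_nonneg _)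
    have g4 : 0 ≤ (c - (1 + 2 * μ * Cstb ^ 2)) * ‖φj - a‖ ^ 2 :=
      mul_nonneg (by linarith) (sq_nonneg _)
    nlinarith [g1, g2, g3, g4, sq_nonneg ‖b - a‖]
end

section
/- Under the axioms (A1) stability, (A3) reliability, the PCG contraction with factor 0 < q_pcg < 1, and the stopping criterion of Algorithm 3, there exists C > 0 depending only on q_pcg, C_stb, C_rel such that |||φ* − φ_{j,k}||| ≤ C (η_j(φ_{j,k}) + |||φ_{j,k} − φ_{j,k−1}|||) for all indices (j,k) with k ≥ 1. -/
/-- Theorem 4(a), reliability: under stability (A1), reliability (A3), and the PCG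
contraction, there exists `C > 0` depending only on `q_pcg, C_stb, C_rel` with
`|||φ* − φ_{j,k}||| ≤ C (η_j(φ_{j,k}) + |||φ_{j,k} − φ_{j,k−1}|||)` for `k ≥ 1`.
Here `a = φ_{j,k−1}`, `b = φ_{j,k}`, `ηb = η_j(φ_{j,k})`, `ηstar = η_j(φ*_j)`. -/
theorem stmt_11 (q Cstb Crel : ℝ)
    (hq0 : 0 < q) (hq1 : q < 1) (hCstb : 0 < Cstb) (hCrel : 0 < Crel) :
    ∃ C : ℝ, 0 < C ∧
      ∀ (H : Type) [NormedAddCommGroup H] [InnerProductSpace ℝ H]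
        (φstar φj a b : H) (ηb ηstar : ℝ),
        0 ≤ ηb → 0 ≤ ηstar →
        -- PCG contraction from the (k−1)-th to the k-th iterate
        ‖φj - b‖ ≤ q * ‖φj - a‖ →
        -- stability (A1)
        |ηb - ηstar| ≤ Cstb * ‖b - φj‖ →
        -- reliability (A3)
        ‖φstar - φj‖ ≤ Crel * ηstar →
        ‖φstar - b‖ ≤ C * (ηb + ‖b - a‖) := by
  have h1q : (0:ℝ) < 1 - q := by linarith
  have ht : 0 < q / (1 - q) := div_pos hq0 h1q
  refine ⟨Crel + (Crel * Cstb + 1) * (q / (1 - q)), by positivity, ?_⟩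
  intro H _ _ φstar φj a b ηb ηstar hηb hηstar hpcg hstb hrel
  have h1 : ‖φj - a‖ ≤ ‖φj - b‖ + ‖b - a‖ := by
    have := norm_add_le (φj - b) (b - a); simpa using this
  have hba : 0 ≤ ‖b - a‖ := norm_nonneg _
  have h2 : (1 - q) * ‖φj - b‖ ≤ q * ‖b - a‖ := by nlinarith
  have h3 : ‖φj - b‖ ≤ q / (1 - q) * ‖b - a‖ := by
    rw [div_mul_eq_mul_div, le_div_iff₀ h1q]; linarith
  have h4 : ηstar ≤ ηb + Cstb * ‖b - φj‖ := by
    have := abs_le.mp hstb; linarith [this.1]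
  have h5 : ‖φstar - b‖ ≤ ‖φstar - φj‖ + ‖φj - b‖ := by
    have := norm_add_le (φstar - φj) (φj - b); simpa using this
  have h6 : ‖b - φj‖ = ‖φj - b‖ := norm_sub_rev _ _
  rw [h6] at h4
  have hK : (0:ℝ) ≤ Crel * Cstb + 1 := by positivity
  calc ‖φstar - b‖ ≤ Crel * ηstar + ‖φj - b‖ := by linarith
    _ ≤ Crel * (ηb + Cstb * ‖φj - b‖) + ‖φj - b‖ := by
        have := mul_le_mul_of_nonneg_left h4 hCrel.le; linarith
    _ = Crel * ηb + (Crel * Cstb + 1) * ‖φj - b‖ := by ring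
    _ ≤ Crel * ηb + (Crel * Cstb + 1) * (q / (1 - q) * ‖b - a‖) := by
        have := mul_le_mul_of_nonneg_left h3 hK; linarith
    _ ≤ (Crel + (Crel * Cstb + 1) * (q / (1 - q))) * (ηb + ‖b - a‖) := by
        nlinarith [mul_nonneg hCrel.le hba, mul_nonneg (mul_nonneg hK ht.le) hηb]
end

section
/- Let 0 < λ < λ_opt and 0 < θ ≤ 1 satisfy θ'' := (θ + λ/λ_opt)/(1 − λ/λ_opt) < 1. Suppose a set R ⊆ T_j satisfies the Dörfler marking θ'' η_j(φ*_j) ≤ η_j(R, φ*_j) for the exact Galerkin solution, stability |η_j(U,ψ) − η_j(U,ψ')| ≤ C_stb|||ψ − ψ'||| holds for all subsets U, and the PCG stopping implies |||φ*_j − φ_{j,k̲}||| ≤ (λ/λ_opt) C_stb^{-1} η_j(φ_{j,k̲}) as well as the two-sided estimator equivalence (1 − λ/λ_opt) η_j(φ_{j,k̲}) ≤ η_j(φ*_j). Then R also satisfies the Dörfler marking θ η_j(φ_{j,k̲}) ≤ η_j(R, φ_{j,k̲}) for the inexact solution φ_{j,k̲}. -/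
/-- Step 1 of the proof of Theorem 4(c): transfer of the Dörfler marking from the
exact Galerkin solution `φ*_j` (with parameter `θ''`) to the inexact PCG iterate
`φ_{j,k̲}` (with parameter `θ`). Here `ηRstar = η_j(R, φ*_j)`, `ηfullstar = η_j(φ*_j)`,
`ηR = η_j(R, φ_{j,k̲})`, `ηfull = η_j(φ_{j,k̲})`. -/
theorem stmt_12 (H : Type*) [NormedAddCommGroup H] [InnerProductSpace ℝ H]
    (φj φ : H) (θ θ'' lam lamopt Cstb ηR ηfull ηRstar ηfullstar : ℝ)
    (hθ0 : 0 < θ) (hθ1 : θ ≤ 1) (hlam0 : 0 < lam) (hlam1 : lam < lamopt)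
    (hCstb : 0 < Cstb)
    (hηR : 0 ≤ ηR) (hηfull : 0 ≤ ηfull) (hηRstar : 0 ≤ ηRstar) (hηfullstar : 0 ≤ ηfullstar)
    (hθ'' : θ'' = (θ + lam / lamopt) / (1 - lam / lamopt))
    (hθ''1 : θ'' < 1)
    -- Dörfler marking for the exact Galerkin solution
    (hmark : θ'' * ηfullstar ≤ ηRstar)
    -- stability (A1) on the subset R
    (hstab : |ηR - ηRstar| ≤ Cstb * ‖φj - φ‖)
    -- consequence of the PCG stopping criterion (Lemma 15)
    (hpcg : ‖φj - φ‖ ≤ (lam / lamopt) * Cstb⁻¹ * ηfull)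
    -- estimator equivalence (Lemma 15)
    (hequiv : (1 - lam / lamopt) * ηfull ≤ ηfullstar) :
    θ * ηfull ≤ ηR := by
  set q := lam / lamopt with hq
  have hlamopt : 0 < lamopt := hlam0.trans hlam1
  have hq0 : 0 < q := div_pos hlam0 hlamopt
  have hq1 : q < 1 := (div_lt_one hlamopt).mpr hlam1
  have h1q : 0 < 1 - q := by linarith
  have hstab' : ηRstar - ηR ≤ Cstb * ‖φj - φ‖ := by
    have := (abs_le.mp hstab).1; linarith
  have hC : Cstb * ‖φj - φ‖ ≤ q * ηfull := by
    calc Cstb * ‖φj - φ‖ ≤ Cstb * (q * Cstb⁻¹ * ηfull) := by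
          exact mul_le_mul_of_nonneg_left hpcg hCstb.le
      _ = q * ηfull := by field_simp
  have hθ''eq : θ'' * (1 - q) = θ + q := by
    rw [hθ'']; field_simp
  have hmark' : θ'' * ((1 - q) * ηfull) ≤ ηRstar := by
    have hθ''0 : 0 ≤ θ'' := by
      have : 0 < θ + q := by linarith
      nlinarith
    exact (mul_le_mul_of_nonneg_left hequiv hθ''0).trans hmark
  have : (θ + q) * ηfull ≤ ηRstar := by nlinarith
  linarith
end

section
/- Suppose the mesh-refinement satisfies the splitting property: each refined element is split into at least 2 and at most C_son sons, i.e., #(T\T') + #T ≤ #T' ≤ C_son #(T\T') + #(T∩T') for T' = refine(T, M). Let T_{j+1} = refine(T_j, M_j) with M_j ≠ ∅ for all j, starting from T_0. If for some s > 0 the quasi-errors Λ_{j,k} ≥ c η_j(φ*_j) satisfy sup_{(j,k)} (#T_j − #T_0 + 1)^s Λ_{j,k} < ∞, then the approximation class norm ‖φ*‖_{A_s} := sup_{N∈ℕ₀} (N+1)^s min{η•(φ*_•) : T• ∈ refine(T_0), #T• − #T_0 ≤ N} is finite. -/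
set_option maxHeartbeats 1000000


/-- Lemma 17: if the refinement satisfies the splitting property (each mesh in the
adaptive sequence `T_j` with nonempty marking satisfies
`#T_j < #T_{j+1} ≤ C_son #T_j`), every `j` occurs in the index set `Q`, the
quasi-errors dominate the Galerkin estimators `c η_j(φ*_j) ≤ Λ_{j,k}`, and
`sup_{(j,k)∈Q} (#T_j − #T_0 + 1)^s Λ_{j,k} < ∞`, then the approximation class norm
`‖φ*‖_{A_s}` is finite, i.e. there is `B` such that for every `N` some refinement
`T' ∈ refine(T_0)` with `#T' − #T_0 ≤ N` has `(N+1)^s η(T') ≤ B`. -/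
theorem stmt_15 (Cson : ℕ) (hson : 2 ≤ Cson) (s c : ℝ) (hs : 0 < s) (hc : 0 < c)
    (Mesh : Type) (card : Mesh → ℕ) (refine : Set Mesh)
    (η : Mesh → ℝ) (T : ℕ → Mesh) (T₀ : Mesh) (Q : Set (ℕ × ℕ)) (Λ : ℕ × ℕ → ℝ)
    (hT0 : T 0 = T₀)
    (hηpos : ∀ T' ∈ refine, 0 ≤ η T')
    (hcard0 : 1 ≤ card T₀)
    (hchain : ∀ j : ℕ, T j ∈ refine)
    -- splitting property (R1) with nonempty marking M_j ≠ ∅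
    (hsplit : ∀ j : ℕ, card (T j) < card (T (j + 1)) ∧
      card (T (j + 1)) ≤ Cson * card (T j))
    (hQ : ∀ j : ℕ, ∃ k : ℕ, (j, k) ∈ Q)
    -- quasi-error dominates the exact estimator (via Pythagoras and (A1))
    (hdom : ∀ p ∈ Q, c * η (T p.1) ≤ Λ p)
    (hΛpos : ∀ p ∈ Q, 0 ≤ Λ p)
    -- sup_{(j,k)∈Q} (#T_j − #T_0 + 1)^s Λ_{j,k} < ∞
    (hsup : ∃ M : ℝ, ∀ p ∈ Q, ((card (T p.1) : ℝ) - (card T₀ : ℝ) + 1) ^ s * Λ p ≤ M) :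
    ∃ B : ℝ, ∀ N : ℕ, ∃ T' ∈ refine, card T' ≤ card T₀ + N ∧
      ((N : ℝ) + 1) ^ s * η T' ≤ B := by

  obtain ⟨M, hM⟩ := hsup
  set K : ℝ := (Cson : ℝ) + ((Cson : ℝ) - 1) * ((card T₀ : ℝ) - 1) with hK
  have hK1 : (1 : ℝ) ≤ K := by
    have h1 : (2 : ℝ) ≤ (Cson : ℝ) := by exact_mod_cast hson
    have h2 : (1 : ℝ) ≤ (card T₀ : ℝ) := by exact_mod_cast hcard0
    nlinarith
  have hgrow : ∀ j : ℕ, card T₀ + j ≤ card (T j) := by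
    intro j
    induction j with
    | zero => simp [hT0]
    | succ j ih => have := (hsplit j).1; omega
  refine ⟨K ^ s * M / c, ?_⟩
  intro N
  have hex : ∃ j, card T₀ + N < card (T j) := ⟨N + 1, by have := hgrow (N + 1); omega⟩
  have hm0 : Nat.find hex ≠ 0 := by
    intro h
    have := Nat.find_spec hex
    rw [h, hT0] at this; omega
  obtain ⟨j, hj⟩ : ∃ j, Nat.find hex = j + 1 := ⟨Nat.find hex - 1, by omega⟩
  have hle : card (T j) ≤ card T₀ + N := by
    have := Nat.find_min hex (by omega : j < Nat.find hex); omega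
  have hlt : card T₀ + N < card (T (j + 1)) := by
    have := Nat.find_spec hex; rw [hj] at this; exact this
  obtain ⟨k, hk⟩ := hQ j
  refine ⟨T j, hchain j, hle, ?_⟩
  set a : ℝ := (card (T j) : ℝ) - (card T₀ : ℝ) + 1 with ha
  have ha1 : (1 : ℝ) ≤ a := by
    have := hgrow j
    have : (card T₀ : ℝ) ≤ (card (T j) : ℝ) := by exact_mod_cast (by omega : card T₀ ≤ card (T j))
    simp [ha]; linarith
  have hkey : (N : ℝ) + 1 ≤ K * a := by
    have h1 : card T₀ + N + 1 ≤ Cson * card (T j) := by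
      have := (hsplit j).2; omega
    have h1' : (card T₀ : ℝ) + N + 1 ≤ (Cson : ℝ) * (card (T j) : ℝ) := by exact_mod_cast h1
    have h2 : (2 : ℝ) ≤ (Cson : ℝ) := by exact_mod_cast hson
    have h3 : (1 : ℝ) ≤ (card T₀ : ℝ) := by exact_mod_cast hcard0
    nlinarith [mul_le_mul_of_nonneg_left ha1 (by nlinarith : (0:ℝ) ≤ ((Cson:ℝ)-1) * ((card T₀ : ℝ) - 1))]
  have hpow : ((N : ℝ) + 1) ^ s ≤ K ^ s * a ^ s := by
    rw [← Real.mul_rpow (by linarith) (by linarith)]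
    exact Real.rpow_le_rpow (by positivity) hkey hs.le
  have hη : 0 ≤ η (T j) := hηpos _ (hchain j)
  have hap : (0 : ℝ) ≤ a ^ s := Real.rpow_nonneg (by linarith) s
  have hKp : (0 : ℝ) ≤ K ^ s := Real.rpow_nonneg (by linarith) s
  have hdom' : c * η (T j) ≤ Λ (j, k) := hdom _ hk
  have hMj : a ^ s * Λ (j, k) ≤ M := hM _ hk
  have step1 : ((N : ℝ) + 1) ^ s * η (T j) ≤ K ^ s * a ^ s * η (T j) :=
    mul_le_mul_of_nonneg_right hpow hη
  have step2 : a ^ s * (c * η (T j)) ≤ M := le_trans (mul_le_mul_of_nonneg_left hdom' hap) hMj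
  have step3 : K ^ s * a ^ s * η (T j) ≤ K ^ s * M / c := by
    have : a ^ s * η (T j) ≤ M / c := by
      rw [le_div_iff₀ hc]
      calc a ^ s * η (T j) * c = a ^ s * (c * η (T j)) := by ring
        _ ≤ M := step2
    calc K ^ s * a ^ s * η (T j) = K ^ s * (a ^ s * η (T j)) := by ring
      _ ≤ K ^ s * (M / c) := mul_le_mul_of_nonneg_left this hKp
      _ = K ^ s * M * c⁻¹ := by ring
  linarith
end

section
/- Let (Λ_{j,k})_{(j,k)∈Q} be positive quasi-errors that are linearly convergent: Λ_{j',k'} ≤ C_lin q_lin^{|(j',k')|−|(j,k)|} Λ_{j,k} for all (j',k') ≥ (j,k) in Q, with C_lin ≥ 1, 0 < q_lin < 1, and total-iteration counter |·|. Assume sup_{(j,k)∈Q} (#T_j)^s Λ_{j,k} < ∞ for some s > 0, and (#T_j) log²(1+#T_j) ≤ C_δ (#T_j)^{1+δ} for every δ > 0. Then for every 0 < ε < s, sup_{(j',k')∈Q} [Σ_{(j,k)≤(j',k')} (#T_j) log²(1+#T_j)]^{s−ε} Λ_{j',k'} < ∞. -/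
/-!
Take `t = s - ε` and `δ = s / t - 1 > 0`, so that the cost of step `(j, k)` is
`≲ (#T_j) ^ (s / t)`. By rate `s` and linear convergence, `(#T_j) ^ s Λ_{j',k'} ≲ q ^ d`
with `d = |(j',k')| - |(j,k)|`, hence each cost is `≲ Λ_{j',k'} ^ (-1/t) (q ^ (1/t)) ^ d`.
The counter is injective, so the distances `d` are distinct and the cumulative cost is
dominated by a geometric series: it is `≲ Λ_{j',k'} ^ (-1/t)`.
-/

open Finset

theorem sum_pow_sub_le_of_injOn {ι : Type*} (F : Finset ι) (f : ι → ℕ) {N : ℕ}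
    (hf : Set.InjOn f F) (hN : ∀ i ∈ F, f i ≤ N) {r : ℝ} (h0 : 0 ≤ r) (h1 : r < 1) :
    ∑ i ∈ F, r ^ (N - f i) ≤ (1 - r)⁻¹ := by
  classical
  have hinj : Set.InjOn (fun i => N - f i) F := fun i hi j hj hij =>
    hf hi hj (by have := hN i hi; have := hN j hj; simp only at hij; omega)
  rw [← sum_image hinj, ← tsum_geometric_of_lt_one h0 h1]
  exact (summable_geometric_of_lt_one h0 h1).sum_le_tsum _ fun n _ => pow_nonneg h0 n

theorem sum_mul_le_of_le_pow_sub {ι : Type*} {F : Finset ι} {f : ι → ℕ} {N : ℕ}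
    (hf : Set.InjOn f F) (hN : ∀ i ∈ F, f i ≤ N) {r : ℝ} (h0 : 0 ≤ r) (h1 : r < 1)
    {a : ι → ℝ} {b K : ℝ} (hK : 0 ≤ K) (ha : ∀ i ∈ F, a i * b ≤ K * r ^ (N - f i)) :
    (∑ i ∈ F, a i) * b ≤ K * (1 - r)⁻¹ :=
  calc (∑ i ∈ F, a i) * b = ∑ i ∈ F, a i * b := sum_mul _ _ _
    _ ≤ ∑ i ∈ F, K * r ^ (N - f i) := sum_le_sum ha
    _ = K * ∑ i ∈ F, r ^ (N - f i) := (mul_sum _ _ _).symm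
    _ ≤ K * (1 - r)⁻¹ := mul_le_mul_of_nonneg_left (sum_pow_sub_le_of_injOn F f hf hN h0 h1) hK

theorem Real.rpow_div_mul_rpow_inv_le_of_linear {x e₀ e₁ M C q s t : ℝ} {d : ℕ} (hx : 0 ≤ x)
    (he₁ : 0 ≤ e₁) (hM : 0 ≤ M) (hC : 0 ≤ C) (hq : 0 ≤ q) (ht : 0 < t)
    (hrate : x ^ s * e₀ ≤ M) (hlin : e₁ ≤ C * q ^ d * e₀) :
    x ^ (s / t) * e₁ ^ t⁻¹ ≤ (M * C) ^ t⁻¹ * (q ^ t⁻¹) ^ d := by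
  have hxs : 0 ≤ x ^ s := Real.rpow_nonneg hx s
  have key : x ^ s * e₁ ≤ M * C * q ^ d :=
    calc x ^ s * e₁ ≤ x ^ s * (C * q ^ d * e₀) := mul_le_mul_of_nonneg_left hlin hxs
      _ = C * q ^ d * (x ^ s * e₀) := by ring
      _ ≤ C * q ^ d * M := mul_le_mul_of_nonneg_left hrate (by positivity)
      _ = M * C * q ^ d := by ring
  calc x ^ (s / t) * e₁ ^ t⁻¹ = (x ^ s * e₁) ^ t⁻¹ := by
        rw [Real.mul_rpow hxs he₁, ← Real.rpow_mul hx, div_eq_mul_inv]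
    _ ≤ (M * C * q ^ d) ^ t⁻¹ := Real.rpow_le_rpow (by positivity) key (by positivity)
    _ = (M * C) ^ t⁻¹ * (q ^ t⁻¹) ^ d := by
        rw [Real.mul_rpow (by positivity) (by positivity), Real.rpow_pow_comm hq]

theorem Real.rpow_mul_le_of_mul_rpow_inv_le {S a K t : ℝ} (hS : 0 ≤ S) (ha : 0 ≤ a)
    (ht : 0 < t) (h : S * a ^ t⁻¹ ≤ K) : S ^ t * a ≤ K ^ t := by
  calc S ^ t * a = (S * a ^ t⁻¹) ^ t := by
        rw [Real.mul_rpow hS (Real.rpow_nonneg ha _), Real.rpow_inv_rpow ha ht.ne']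
    _ ≤ K ^ t := Real.rpow_le_rpow (by positivity) h ht.le

theorem stmt_17_general (Clin qlin s : ℝ) (hC : 1 ≤ Clin) (hq0 : 0 < qlin) (hq1 : qlin < 1)
    (Q : Set (ℕ × ℕ)) (cnt : ℕ × ℕ → ℕ) (Λ : ℕ × ℕ → ℝ) (T : ℕ → ℕ)
    (ord : ℕ × ℕ → ℕ × ℕ → Prop)
    (hΛpos : ∀ p ∈ Q, 0 < Λ p)
    -- linear convergence (Theorem 4(b))
    (hlin : ∀ p ∈ Q, ∀ r ∈ Q, ord p r → Λ r ≤ Clin * qlin ^ (cnt r - cnt p) * Λ p)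
    (hcnt : ∀ p ∈ Q, ∀ r ∈ Q, ord p r → cnt p ≤ cnt r)
    (hinj : Set.InjOn cnt Q)
    (hfin : ∀ p ∈ Q, Set.Finite {r ∈ Q | ord r p})
    -- rate s with respect to the degrees of freedom (Theorem 4(c))
    (hsup : ∃ M : ℝ, ∀ p ∈ Q, ((T p.1 : ℝ)) ^ s * Λ p ≤ M)
    -- `N log²(1+N) ≤ C_δ N^{1+δ}` for every `δ > 0`
    (hlog : ∀ δ : ℝ, 0 < δ → ∃ Cδ : ℝ, ∀ j : ℕ,
      (T j : ℝ) * (Real.log (1 + (T j : ℝ))) ^ 2 ≤ Cδ * (T j : ℝ) ^ (1 + δ)) :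
    ∀ ε : ℝ, 0 < ε → ε < s →
      ∃ M : ℝ, ∀ p' : ℕ × ℕ, ∀ hp' : p' ∈ Q,
        (∑ p ∈ (hfin p' hp').toFinset,
            (T p.1 : ℝ) * (Real.log (1 + (T p.1 : ℝ))) ^ 2) ^ (s - ε) * Λ p' ≤ M := by
  intro ε hε hεs
  set t := s - ε
  have ht : 0 < t := sub_pos.2 hεs
  obtain ⟨Cδ, hCδ⟩ := hlog (s / t - 1) (by rw [sub_pos, one_lt_div ht]; linarith)
  have hcost (j : ℕ) :
      (T j : ℝ) * Real.log (1 + T j) ^ 2 ≤ max Cδ 0 * (T j : ℝ) ^ (s / t) := by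
    have h := hCδ j
    rw [add_sub_cancel] at h
    exact h.trans (by gcongr; exact le_max_left _ _)
  obtain ⟨M, hM⟩ := hsup
  have hMC : 0 ≤ max M 0 * Clin := mul_nonneg (le_max_right _ _) (by linarith)
  have hr1 : qlin ^ t⁻¹ < 1 := Real.rpow_lt_one hq0.le hq1 (inv_pos.2 ht)
  refine ⟨(max Cδ 0 * (max M 0 * Clin) ^ t⁻¹ * (1 - qlin ^ t⁻¹)⁻¹) ^ t, fun p' hp' => ?_⟩
  have hΛ' := (hΛpos p' hp').le
  have hmem (p) (hp : p ∈ (hfin p' hp').toFinset) : p ∈ Q ∧ ord p p' :=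
    (hfin p' hp').mem_toFinset.1 hp
  refine Real.rpow_mul_le_of_mul_rpow_inv_le (sum_nonneg fun p _ => by positivity) hΛ' ht
    (sum_mul_le_of_le_pow_sub (hinj.mono fun p hp => (hmem p hp).1)
      (fun p hp => hcnt p (hmem p hp).1 p' hp' (hmem p hp).2) (by positivity) hr1
      (by positivity) fun p hp => ?_)
  obtain ⟨hpQ, hpp'⟩ := hmem p hp
  calc (T p.1 : ℝ) * Real.log (1 + T p.1) ^ 2 * Λ p' ^ t⁻¹
      ≤ max Cδ 0 * ((T p.1 : ℝ) ^ (s / t) * Λ p' ^ t⁻¹) := by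
        rw [← mul_assoc]; exact mul_le_mul_of_nonneg_right (hcost p.1) (by positivity)
    _ ≤ max Cδ 0 * ((max M 0 * Clin) ^ t⁻¹ * (qlin ^ t⁻¹) ^ (cnt p' - cnt p)) := by
        refine mul_le_mul_of_nonneg_left ?_ (le_max_right _ _)
        exact Real.rpow_div_mul_rpow_inv_le_of_linear (by positivity) hΛ' (le_max_right _ _)
          (by linarith) hq0.le ht ((hM p hpQ).trans (le_max_left _ _)) (hlin p hpQ p' hp' hpp')
    _ = _ := by ring

/-- Corollary 5 (almost optimal computational complexity): if the quasi-errors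
`Λ_{j,k}` are linearly convergent with respect to the total PCG-iteration counter
`cnt` and converge at rate `s` with respect to the number of elements `#T_j`, then
for every `0 < ε < s` they converge at rate `s − ε` with respect to the cumulative
computational costs `Σ_{(j,k)≤(j',k')} (#T_j) log²(1+#T_j)`. -/
theorem stmt_17 (Clin qlin s : ℝ) (hC : 1 ≤ Clin) (hq0 : 0 < qlin) (hq1 : qlin < 1)
    (hs : 0 < s)
    (Q : Set (ℕ × ℕ)) (cnt : ℕ × ℕ → ℕ) (Λ : ℕ × ℕ → ℝ) (T : ℕ → ℕ)
    (ord : ℕ × ℕ → ℕ × ℕ → Prop)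
    -- lexicographic ordering on the index set
    (hord : ∀ p r : ℕ × ℕ, ord p r ↔ p.1 < r.1 ∨ (p.1 = r.1 ∧ p.2 ≤ r.2))
    (hT : ∀ j : ℕ, 1 ≤ T j)
    (hΛpos : ∀ p ∈ Q, 0 < Λ p)
    -- linear convergence (Theorem 4(b))
    (hlin : ∀ p ∈ Q, ∀ r ∈ Q, ord p r → Λ r ≤ Clin * qlin ^ (cnt r - cnt p) * Λ p)
    (hcnt : ∀ p ∈ Q, ∀ r ∈ Q, ord p r → cnt p ≤ cnt r)
    (hinj : Set.InjOn cnt Q)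
    (hfin : ∀ p ∈ Q, Set.Finite {r ∈ Q | ord r p})
    -- rate s with respect to the degrees of freedom (Theorem 4(c))
    (hsup : ∃ M : ℝ, ∀ p ∈ Q, ((T p.1 : ℝ)) ^ s * Λ p ≤ M)
    -- `N log²(1+N) ≤ C_δ N^{1+δ}` for every `δ > 0`
    (hlog : ∀ δ : ℝ, 0 < δ → ∃ Cδ : ℝ, ∀ j : ℕ,
      (T j : ℝ) * (Real.log (1 + (T j : ℝ))) ^ 2 ≤ Cδ * (T j : ℝ) ^ (1 + δ)) :
    ∀ ε : ℝ, 0 < ε → ε < s →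
      ∃ M : ℝ, ∀ p' : ℕ × ℕ, ∀ hp' : p' ∈ Q,
        (∑ p ∈ (hfin p' hp').toFinset,
            (T p.1 : ℝ) * (Real.log (1 + (T p.1 : ℝ))) ^ 2) ^ (s - ε) * Λ p' ≤ M :=
  stmt_17_general Clin qlin s hC hq0 hq1 Q cnt Λ T ord hΛpos hlin hcnt hinj hfin hsup hlog
end

section
/- Let H be a Hilbert space with energy norm |||·|||, X_j a finite-dimensional subspace, φ*_j ∈ X_j the Galerkin projection of φ* ∈ H, and let φ_{j,k} ∈ X_j satisfy the PCG contraction |||φ*_j − φ_{j,k+1}||| ≤ q|||φ*_j − φ_{j,k}||| with 0 < q < 1. Suppose increments satisfy the stopping criterion violation |||φ_{j,k+1} − φ_{j,k}||| > λ η_j(φ_{j,k+1}) (i.e., k+1 < k̲), the estimator stability (A1), and reliability (A3). Then for suitable constants 0 < μ, ε < 1 depending only on q, λ, C_stb, C_rel, the weighted quasi-error Δ_{j,k} := μη_j(φ_{j,k})² + |||φ* − φ_{j,k}|||² contracts: Δ_{j,k+1} ≤ q_ctr Δ_{j,k} with some 0 < q_ctr < 1 depending only on q, λ, C_stb, C_rel.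 -/
/-!
With `e = |||φ*_j − φ_{j,k}|||`, `e' = |||φ*_j − φ_{j,k+1}|||` and `d = |||φ_{j,k+1} − φ_{j,k}|||`,
the Galerkin identity reduces the claim to `μ η² + δ r² + e'² ≤ (1 − δ) e²` for
`r = |||φ* − φ*_j|||`. Failure of the stopping criterion bounds `μ η²` by `d² / 2` once
`μ ≤ λ² / 2`, and the PCG identity `e'² + d² = e²` together with `e' ≤ q e` leaves a
gap `d² / 2 ≥ (1 − q²) e² / 2`. Reliability and stability bound `r²` by a multiple `C e²`,
so a share `δ` of that gap absorbs `δ r²`.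
-/

lemma sq_le_two_mul_sq_mul_add_sq {r C x y : ℝ} (hr : 0 ≤ r)
    (h : r ≤ C * (x + y)) : r ^ 2 ≤ 2 * C ^ 2 * (x ^ 2 + y ^ 2) :=
  calc r ^ 2 ≤ (C * (x + y)) ^ 2 := pow_le_pow_left₀ hr h 2
    _ = C ^ 2 * (x + y) ^ 2 := mul_pow C (x + y) 2
    _ ≤ C ^ 2 * (2 * (x ^ 2 + y ^ 2)) := by gcongr; exact add_sq_le
    _ = 2 * C ^ 2 * (x ^ 2 + y ^ 2) := by ring

/-- The constant `C` with `|||φ* − φ*_j|||² ≤ C |||φ*_j − φ_{j,k}|||²`. -/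
noncomputable def reliabilityConst (lam Cstb Crel : ℝ) : ℝ :=
  2 * Crel ^ 2 * (1 / lam ^ 2 + Cstb ^ 2)

noncomputable def estimatorWeight (lam : ℝ) : ℝ := min (1 / 2) (lam ^ 2 / 2)

noncomputable def contractionGap (q lam Cstb Crel : ℝ) : ℝ :=
  (1 - q ^ 2) / (2 * (1 + reliabilityConst lam Cstb Crel))

lemma reliabilityConst_nonneg (lam Cstb Crel : ℝ) : 0 ≤ reliabilityConst lam Cstb Crel := by
  unfold reliabilityConst; positivity

lemma estimatorWeight_pos {lam : ℝ} (hlam : 0 < lam) : 0 < estimatorWeight lam :=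
  lt_min (by norm_num) (by positivity)

lemma estimatorWeight_lt_one (lam : ℝ) : estimatorWeight lam < 1 :=
  (min_le_left _ _).trans_lt (by norm_num)

lemma contractionGap_pos {q : ℝ} (hq0 : 0 < q) (hq1 : q < 1) (lam Cstb Crel : ℝ) :
    0 < contractionGap q lam Cstb Crel := by
  have hq2 : 0 < 1 - q ^ 2 := by nlinarith
  have := reliabilityConst_nonneg lam Cstb Crel
  unfold contractionGap; positivity

lemma contractionGap_lt_one (q lam Cstb Crel : ℝ) :
    contractionGap q lam Cstb Crel < 1 := by
  have := reliabilityConst_nonneg lam Cstb Crel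
  unfold contractionGap
  rw [div_lt_one (by positivity)]
  nlinarith [sq_nonneg q]

lemma sq_le_reliabilityConst_mul {lam Cstb Crel r ηb ηstar e eb : ℝ} (hCrel : 0 ≤ Crel)
    (hr : 0 ≤ r) (hrel : r ≤ Crel * ηstar) (hstb : |ηstar - ηb| ≤ Cstb * eb)
    (hηb : ηb ^ 2 ≤ e ^ 2 / lam ^ 2) (heb : eb ^ 2 ≤ e ^ 2) :
    r ^ 2 ≤ reliabilityConst lam Cstb Crel * e ^ 2 := by
  have hηstar : ηstar ≤ ηb + Cstb * eb := by linarith [(abs_le.mp hstb).2]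
  calc r ^ 2 ≤ 2 * Crel ^ 2 * (ηb ^ 2 + (Cstb * eb) ^ 2) :=
        sq_le_two_mul_sq_mul_add_sq hr (hrel.trans (mul_le_mul_of_nonneg_left hηstar hCrel))
    _ = 2 * Crel ^ 2 * (ηb ^ 2 + Cstb ^ 2 * eb ^ 2) := by ring
    _ ≤ 2 * Crel ^ 2 * (e ^ 2 / lam ^ 2 + Cstb ^ 2 * e ^ 2) := by gcongr
    _ = reliabilityConst lam Cstb Crel * e ^ 2 := by unfold reliabilityConst; ring

lemma contractionGap_mul (q lam Cstb Crel : ℝ) :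
    contractionGap q lam Cstb Crel * (1 + reliabilityConst lam Cstb Crel) = (1 - q ^ 2) / 2 := by
  have := reliabilityConst_nonneg lam Cstb Crel
  unfold contractionGap
  field_simp

lemma weighted_quasiError_le {q lam C μ δ e eb d r ηa ηb : ℝ}
    (hμ0 : 0 ≤ μ) (hμ : μ ≤ lam ^ 2 / 2) (hδ0 : 0 ≤ δ) (hδ1 : δ ≤ 1)
    (hδ : δ * (1 + C) ≤ (1 - q ^ 2) / 2)
    (hpyth : eb ^ 2 + d ^ 2 = e ^ 2) (hcon : eb ^ 2 ≤ q ^ 2 * e ^ 2)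
    (hstop : lam ^ 2 * ηb ^ 2 ≤ d ^ 2) (hrel : r ^ 2 ≤ C * e ^ 2) :
    μ * ηb ^ 2 + (r ^ 2 + eb ^ 2) ≤ (1 - δ) * (μ * ηa ^ 2 + (r ^ 2 + e ^ 2)) := by
  have hest : μ * ηb ^ 2 ≤ d ^ 2 / 2 :=
    calc μ * ηb ^ 2 ≤ lam ^ 2 / 2 * ηb ^ 2 := by gcongr
      _ ≤ d ^ 2 / 2 := by linarith
  have hgap : (1 - q ^ 2) * e ^ 2 ≤ d ^ 2 := by linarith
  have hδe : δ * (1 + C) * e ^ 2 ≤ (1 - q ^ 2) / 2 * e ^ 2 := by gcongr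
  have hδr : δ * r ^ 2 ≤ δ * (C * e ^ 2) := by gcongr
  have hηa : 0 ≤ (1 - δ) * (μ * ηa ^ 2) := by
    have : 0 ≤ 1 - δ := by linarith
    positivity
  linarith

theorem stmt_18_general (q lam Cstb Crel : ℝ)
    (hq0 : 0 < q) (hq1 : q < 1) (hlam : 0 < lam) (hCrel : 0 < Crel) :
    ∃ μ qctr : ℝ, 0 < μ ∧ μ < 1 ∧ 0 < qctr ∧ qctr < 1 ∧
      ∀ (H : Type) [NormedAddCommGroup H] [InnerProductSpace ℝ H]
        (Xj : Submodule ℝ H) (φstar φj a b : H) (ηa ηb ηstar : ℝ),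
        φj ∈ Xj → a ∈ Xj → b ∈ Xj →
        -- Galerkin Pythagoras identity
        (∀ ψ ∈ Xj, ‖φstar - φj‖ ^ 2 + ‖φj - ψ‖ ^ 2 = ‖φstar - ψ‖ ^ 2) →
        -- PCG Pythagoras identity
        ‖φj - b‖ ^ 2 + ‖b - a‖ ^ 2 = ‖φj - a‖ ^ 2 →
        -- PCG contraction
        ‖φj - b‖ ≤ q * ‖φj - a‖ →
        0 ≤ ηa → 0 ≤ ηb → 0 ≤ ηstar →
        -- failure of the stopping criterion, i.e. k+1 < k̲(j)
        lam * ηb < ‖b - a‖ →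
        -- stability (A1)
        |ηb - ηa| ≤ Cstb * ‖b - a‖ →
        |ηstar - ηa| ≤ Cstb * ‖φj - a‖ →
        |ηstar - ηb| ≤ Cstb * ‖φj - b‖ →
        -- reliability (A3)
        ‖φstar - φj‖ ≤ Crel * ηstar →
        μ * ηb ^ 2 + ‖φstar - b‖ ^ 2 ≤ qctr * (μ * ηa ^ 2 + ‖φstar - a‖ ^ 2) := by
  set δ := contractionGap q lam Cstb Crel
  have hδ0 := contractionGap_pos hq0 hq1 lam Cstb Crel
  refine ⟨estimatorWeight lam, 1 - δ, estimatorWeight_pos hlam, estimatorWeight_lt_one lam,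
    by linarith [contractionGap_lt_one q lam Cstb Crel], by linarith, ?_⟩
  intro H _ _ Xj φstar φj a b ηa ηb ηstar _ ha hb hGal hpyth hcon _ hηb _ hstop _ _ hstb hrel
  rw [← hGal a ha, ← hGal b hb]
  set e := ‖φj - a‖
  set eb := ‖φj - b‖
  have hstop2 : lam ^ 2 * ηb ^ 2 ≤ ‖b - a‖ ^ 2 := by
    rw [← mul_pow]; exact pow_le_pow_left₀ (by positivity) hstop.le 2
  have hcon2 : eb ^ 2 ≤ q ^ 2 * e ^ 2 := by
    rw [← mul_pow]; exact pow_le_pow_left₀ (norm_nonneg _) hcon 2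
  have hηb_le : ηb ^ 2 ≤ e ^ 2 / lam ^ 2 := by
    rw [le_div_iff₀ (by positivity)]; nlinarith
  have hrel2 : ‖φstar - φj‖ ^ 2 ≤ reliabilityConst lam Cstb Crel * e ^ 2 :=
    sq_le_reliabilityConst_mul hCrel.le (norm_nonneg _) hrel hstb hηb_le (by nlinarith)
  exact weighted_quasiError_le (estimatorWeight_pos hlam).le (min_le_right _ _) hδ0.le
    (contractionGap_lt_one q lam Cstb Crel).le (contractionGap_mul q lam Cstb Crel).le
    hpyth hcon2 hstop2 hrel2

/-- Contraction in the PCG-iteration case (estimate (6.1) of Lemma 12): there are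
constants `0 < μ, q_ctr < 1` depending only on `q, λ, C_stb, C_rel` such that, whenever
the stopping criterion fails (`λ η_{j,k+1} < |||φ_{j,k+1} − φ_{j,k}|||`), the weighted
quasi-error `Δ_{j,k} = μ η_j(φ_{j,k})² + |||φ* − φ_{j,k}|||²` contracts:
`Δ_{j,k+1} ≤ q_ctr Δ_{j,k}`. Here `a = φ_{j,k}`, `b = φ_{j,k+1}`. -/
theorem stmt_18 (q lam Cstb Crel : ℝ)
    (hq0 : 0 < q) (hq1 : q < 1) (hlam : 0 < lam) (hCstb : 0 < Cstb) (hCrel : 0 < Crel) :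
    ∃ μ qctr : ℝ, 0 < μ ∧ μ < 1 ∧ 0 < qctr ∧ qctr < 1 ∧
      ∀ (H : Type) [NormedAddCommGroup H] [InnerProductSpace ℝ H]
        (Xj : Submodule ℝ H) (φstar φj a b : H) (ηa ηb ηstar : ℝ),
        φj ∈ Xj → a ∈ Xj → b ∈ Xj →
        -- Galerkin Pythagoras identity
        (∀ ψ ∈ Xj, ‖φstar - φj‖ ^ 2 + ‖φj - ψ‖ ^ 2 = ‖φstar - ψ‖ ^ 2) →
        -- PCG Pythagoras identity
        ‖φj - b‖ ^ 2 + ‖b - a‖ ^ 2 = ‖φj - a‖ ^ 2 →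
        -- PCG contraction
        ‖φj - b‖ ≤ q * ‖φj - a‖ →
        0 ≤ ηa → 0 ≤ ηb → 0 ≤ ηstar →
        -- failure of the stopping criterion, i.e. k+1 < k̲(j)
        lam * ηb < ‖b - a‖ →
        -- stability (A1)
        |ηb - ηa| ≤ Cstb * ‖b - a‖ →
        |ηstar - ηa| ≤ Cstb * ‖φj - a‖ →
        |ηstar - ηb| ≤ Cstb * ‖φj - b‖ →
        -- reliability (A3)
        ‖φstar - φj‖ ≤ Crel * ηstar →
        μ * ηb ^ 2 + ‖φstar - b‖ ^ 2 ≤ qctr * (μ * ηa ^ 2 + ‖φstar - a‖ ^ 2) :=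
  stmt_18_general q lam Cstb Crel hq0 hq1 hlam hCrel
end
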